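/- Fix C > 0. If λ_n → 1 and h_n → 0 with |λ_n − 1|/h_n → 0, then uniformly over integers a, b with 0 ≤ −a, b ≤ C/h_n (a < 0 < b), the ratio of the biased hitting probability (θ_n^0 − θ_n^a)/(θ_n^b − θ_n^a) (θ_n = 1/λ_n) to the symmetric value (−a)/(b−a) converges to 1. -/

import Mathlib

/-!
Multiplying numerator and denominator by `θ ^ (-a)` turns `p · (b - a) / (-a)` into the ratio
of the averages of `θ ^ j` over `j < -a` and over `j < b - a`. Each such power lies within a
factor `exp ((b - a) |log θ|)` of `1`, hence so do both averages, and their ratio lies within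
`exp (2 (b - a) |log θ|)` of `1`. Uniformly in the admissible `a, b`, the exponent is at most
`4 C |log λₙ| / hₙ`, which tends to `0` because `log λ ≈ λ - 1` near `λ = 1`.
-/

open Filter Finset Real
open scoped BigOperators

-- `p_λ(a, b)` as a function of `θ = 1 / λ`.
noncomputable def hittingProb (θ : ℝ) (a b : ℤ) : ℝ := (1 - θ ^ a) / (θ ^ b - θ ^ a)

lemma hittingProb_neg_natCast {θ : ℝ} (hθ₀ : θ ≠ 0) (m n : ℕ) :
    hittingProb θ (-m) n = (θ ^ m - 1) / (θ ^ (m + n) - 1) := by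
  rw [hittingProb, zpow_neg, zpow_natCast, zpow_natCast, ← mul_div_mul_left _ _ (pow_ne_zero m hθ₀)]
  congr 1 <;> field_simp
  ring

lemma hittingProb_mul_eq_expect_div_expect {θ : ℝ} (hθ₀ : θ ≠ 0) (hθ₁ : θ ≠ 1) (m n : ℕ) :
    hittingProb θ (-m) n * ((m : ℝ) + n) / m =
      (𝔼 j ∈ range m, θ ^ j) / 𝔼 j ∈ range (m + n), θ ^ j := by
  rw [expect_eq_sum_div_card, expect_eq_sum_div_card, card_range, card_range,
    geom_sum_eq hθ₁, geom_sum_eq hθ₁, div_right_comm (θ ^ m - 1), div_right_comm (θ ^ (m + n) - 1),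
    div_div_div_cancel_right₀ (sub_ne_zero.2 hθ₁), hittingProb_neg_natCast hθ₀]
  push_cast
  simp only [div_eq_mul_inv, mul_inv, inv_inv]
  ring

lemma abs_log_le_iff {x t : ℝ} (hx : 0 < x) : |log x| ≤ t ↔ exp (-t) ≤ x ∧ x ≤ exp t := by
  rw [abs_le, le_log_iff_exp_le hx, log_le_iff_le_exp hx]

lemma abs_log_expect_pow_le {θ : ℝ} (hθ : 0 < θ) {k : ℕ} (hk : 0 < k) :
    |log (𝔼 j ∈ range k, θ ^ j)| ≤ k * |log θ| := by
  have hne : (range k).Nonempty := nonempty_range_iff.2 hk.ne'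
  have hpow : ∀ j ∈ range k, exp (-(k * |log θ|)) ≤ θ ^ j ∧ θ ^ j ≤ exp (k * |log θ|) :=
    fun j hj => by
      rw [← abs_log_le_iff (pow_pos hθ j), log_pow, abs_mul, Nat.abs_cast]
      exact mul_le_mul_of_nonneg_right (by exact_mod_cast (mem_range.1 hj).le) (abs_nonneg _)
  rw [abs_log_le_iff (expect_pos (fun j _ => pow_pos hθ j) hne)]
  exact ⟨le_expect hne fun j hj => (hpow j hj).1, expect_le hne fun j hj => (hpow j hj).2⟩

lemma abs_sub_one_le_exp_abs_log_sub_one {x : ℝ} (hx : 0 < x) : |x - 1| ≤ exp |log x| - 1 := by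
  conv_lhs => rw [← exp_log hx]
  rcases le_total 0 (log x) with h | h
  · rw [abs_of_nonneg h, abs_of_nonneg (by simpa using h)]
  · rw [abs_of_nonpos h, abs_of_nonpos (by simpa using h)]
    linarith [add_one_le_exp (log x), add_one_le_exp (-log x)]

lemma abs_hittingProb_mul_sub_one_le {θ : ℝ} (hθ : 0 < θ) (hθ₁ : θ ≠ 1) {a b : ℤ} (ha : a < 0)
    (hb : 0 ≤ b) :
    |hittingProb θ a b * ((b : ℝ) - a) / (-a : ℝ) - 1| ≤ exp (2 * ((b : ℝ) - a) * |log θ|) - 1 := by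
  obtain ⟨m, rfl⟩ := Int.exists_eq_neg_ofNat ha.le
  lift b to ℕ using hb
  have hm : 0 < m := by omega
  push_cast [neg_neg, sub_neg_eq_add]
  rw [add_comm, hittingProb_mul_eq_expect_div_expect hθ.ne' hθ₁]
  set A := 𝔼 j ∈ range m, θ ^ j
  set B := 𝔼 j ∈ range (m + b), θ ^ j
  have hA : 0 < A := expect_pos (fun j _ => pow_pos hθ j) (nonempty_range_iff.2 hm.ne')
  have hB : 0 < B := expect_pos (fun j _ => pow_pos hθ j) (nonempty_range_iff.2 (by omega))
  have hlog : |log (A / B)| ≤ 2 * (m + b) * |log θ| := by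
    rw [log_div hA.ne' hB.ne']
    have hmb : (m : ℝ) ≤ m + b := by simp
    calc |log A - log B| ≤ |log A| + |log B| := abs_sub _ _
      _ ≤ m * |log θ| + ((m + b : ℕ) : ℝ) * |log θ| :=
        add_le_add (abs_log_expect_pow_le hθ hm) (abs_log_expect_pow_le hθ (by omega))
      _ ≤ 2 * (m + b) * |log θ| := by push_cast; nlinarith [abs_nonneg (log θ)]
  calc |A / B - 1| ≤ exp |log (A / B)| - 1 := abs_sub_one_le_exp_abs_log_sub_one (div_pos hA hB)
    _ ≤ exp (2 * (m + b) * |log θ|) - 1 := by gcongr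

lemma abs_log_le_two_mul_abs_sub_one {x : ℝ} (hx : 1 / 2 ≤ x) : |log x| ≤ 2 * |x - 1| := by
  have hx0 : 0 < x := by linarith
  rw [abs_le]
  refine ⟨?_, by linarith [log_le_sub_one_of_pos hx0, le_abs_self (x - 1), abs_nonneg (x - 1)]⟩
  rcases le_total x 1 with h | h
  · have : 2 * (x - 1) ≤ 1 - x⁻¹ := by
      have hinv : x⁻¹ ≤ 2 := by rw [inv_le_comm₀ hx0 two_pos]; linarith
      nlinarith [mul_inv_cancel₀ hx0.ne']
    linarith [one_sub_inv_le_log_of_pos hx0, abs_of_nonpos (sub_nonpos.2 h)]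
  · linarith [log_nonneg h, abs_nonneg (x - 1)]

lemma tendsto_abs_log_div_of_tendsto_abs_sub_one_div {ι : Type*} {l : Filter ι} {x h : ι → ℝ}
    (hx : Tendsto x l (nhds 1)) (hpos : ∀ i, 0 < h i)
    (hratio : Tendsto (fun i => |x i - 1| / h i) l (nhds 0)) :
    Tendsto (fun i => |log (x i)| / h i) l (nhds 0) := by
  refine squeeze_zero' (Eventually.of_forall fun i => div_nonneg (abs_nonneg _) (hpos i).le) ?_
    (by simpa using hratio.const_mul 2)
  filter_upwards [hx.eventually (le_mem_nhds (by norm_num : (1 / 2 : ℝ) < 1))] with i hi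
  rw [← mul_div_assoc]
  exact div_le_div_of_nonneg_right (abs_log_le_two_mul_abs_sub_one hi) (hpos i).le

theorem biased_hitting_prob_uniform_ratio_general (C : ℝ)
    (lam : ℕ → ℝ) (hlam : ∀ n, 0 < lam n) (hlamne : ∀ n, lam n ≠ 1)
    (hlim : Tendsto lam atTop (nhds 1))
    (h : ℕ → ℝ) (hpos : ∀ n, 0 < h n)
    (hratio : Tendsto (fun n => |lam n - 1| / h n) atTop (nhds 0)) :
    ∀ ε > 0, ∃ N : ℕ, ∀ n ≥ N, ∀ a b : ℤ, a < 0 → 0 < b →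
      (-a : ℝ) ≤ C / h n → (b : ℝ) ≤ C / h n →
      |((1 - (1 / lam n) ^ a) / ((1 / lam n) ^ b - (1 / lam n) ^ a)) *
          ((b : ℝ) - a) / (-a : ℝ) - 1| < ε := by
  intro ε hε
  have hlog := tendsto_abs_log_div_of_tendsto_abs_sub_one_div hlim hpos hratio
  have hbound : Tendsto (fun n => exp (4 * C * (|log (lam n)| / h n)) - 1) atTop (nhds 0) := by
    simpa using ((hlog.const_mul (4 * C)).rexp).sub_const 1
  obtain ⟨N, hN⟩ := eventually_atTop.1 (hbound.eventually (gt_mem_nhds hε))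
  refine ⟨N, fun n hn a b ha hb haC hbC => ?_⟩
  have hθ : 0 < 1 / lam n := one_div_pos.2 (hlam n)
  have hθ₁ : 1 / lam n ≠ 1 := by simpa using hlamne n
  calc _ ≤ exp (2 * ((b : ℝ) - a) * |log (1 / lam n)|) - 1 :=
        abs_hittingProb_mul_sub_one_le hθ hθ₁ ha hb.le
    _ ≤ exp (2 * (2 * (C / h n)) * |log (lam n)|) - 1 := by
        rw [one_div, log_inv, abs_neg]
        gcongr
        linarith
    _ = exp (4 * C * (|log (lam n)| / h n)) - 1 := by ring_nf
    _ < ε := hN n hn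

/-- Fix `C > 0`. If `λ_n → 1` and `h_n → 0` with `|λ_n − 1|/h_n → 0`, then
uniformly over integers `a < 0 < b` with `−a, b ≤ C/h_n`, the ratio of the
biased hitting probability `(θ_n^0 − θ_n^a)/(θ_n^b − θ_n^a)` (with
`θ_n = 1/λ_n`) to the symmetric value `(−a)/(b−a)` converges to 1. -/
theorem biased_hitting_prob_uniform_ratio (C : ℝ) (hC : 0 < C)
    (lam : ℕ → ℝ) (hlam : ∀ n, 0 < lam n) (hlamne : ∀ n, lam n ≠ 1)
    (hlim : Tendsto lam atTop (nhds 1))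
    (h : ℕ → ℝ) (hpos : ∀ n, 0 < h n)
    (hh : Tendsto h atTop (nhds 0))
    (hratio : Tendsto (fun n => |lam n - 1| / h n) atTop (nhds 0)) :
    ∀ ε > 0, ∃ N : ℕ, ∀ n ≥ N, ∀ a b : ℤ, a < 0 → 0 < b →
      (-a : ℝ) ≤ C / h n → (b : ℝ) ≤ C / h n →
      |((1 - (1 / lam n) ^ a) / ((1 / lam n) ^ b - (1 / lam n) ^ a)) *
          ((b : ℝ) - a) / (-a : ℝ) - 1| < ε :=
  biased_hitting_prob_uniform_ratio_general C lam hlam hlamne hlim h hpos hratio
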